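/- For every integer N ≥ 2, one has the closed form m_N = Q_{N-2}·(−1)^N · ∑_{n=1}^{N-2} (1 − (n+1)·2^{-n} − n(n+1)/4)/Q_n. -/

import Mathlib

/-!
`m` is the binomial transform of `l`, i.e. `m n = Δⁿ l 0`. The recurrence for `l` holds for every
`i` up to explicit corrections at `i = 0` and `i = 2`; applying `Δⁿ` at `0` and using the Euler
transform `Δⁿ (2^{-i} ∑ₖ C(i,k) lₖ) 0 = 2^{-n} Δⁿ l 0` turns it into the first-order recurrence
`m (n+1) = (2^{1-n} - 1) m n + (-1)ⁿ (2n 2^{-n} - 1 + n(n-1)/4)` for `n ≥ 2`. As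
`Q (M+1) = (1 - 2^{-(M+1)}) Q M`, the quotient `(-1)^M m (M+2) / Q M` then telescopes from
`m 2 = 0`.
-/

open Finset

/-- `Q m = ∏_{k=1}^m (1 - 2^{-k})`, with `Q 0 = 1`. -/
noncomputable def Q (m : ℕ) : ℝ := ∏ k ∈ Finset.Icc 1 m, (1 - (2:ℝ) ^ (-(k:ℤ)))

section BinomialTransform

variable {R : Type*} [CommRing R]

/-- The `n`-th forward difference `Δ_[1]^[n] f 0`. -/
def binomialTransform (f : ℕ → R) (n : ℕ) : R :=
  ∑ k ∈ range (n + 1), (n.choose k : R) * (-1) ^ (n - k) * f k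

lemma binomialTransform_add (f g : ℕ → R) (n : ℕ) :
    binomialTransform (fun i ↦ f i + g i) n = binomialTransform f n + binomialTransform g n := by
  simp only [binomialTransform, mul_add, sum_add_distrib]

lemma binomialTransform_sub (f g : ℕ → R) (n : ℕ) :
    binomialTransform (fun i ↦ f i - g i) n = binomialTransform f n - binomialTransform g n := by
  simp only [binomialTransform, mul_sub, sum_sub_distrib]

lemma binomialTransform_const_mul (c : R) (f : ℕ → R) (n : ℕ) :
    binomialTransform (fun i ↦ c * f i) n = c * binomialTransform f n := by
  simp only [binomialTransform, mul_sum]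
  exact sum_congr rfl fun _ _ ↦ by ring

lemma binomialTransform_ite_eq (j : ℕ) (a : R) (n : ℕ) :
    binomialTransform (fun i ↦ if i = j then a else 0) n = n.choose j * (-1) ^ (n - j) * a := by
  simp only [binomialTransform, mul_ite, mul_zero, sum_ite_eq', mem_range]
  split_ifs with hj
  · rfl
  · rw [Nat.choose_eq_zero_of_lt (by omega), Nat.cast_zero, zero_mul, zero_mul]

lemma binomialTransform_succ (f : ℕ → R) (n : ℕ) :
    binomialTransform f (n + 1) =
      binomialTransform (fun k ↦ f (k + 1)) n - binomialTransform f n := by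
  have hpascal := sum_choose_succ_mul (R := R) (fun i j ↦ (-1) ^ j * f i) n
  have hsign : ∀ i ∈ range (n + 1),
      (n.choose i : R) * (-1) ^ (n + 1 - i) * f i =
        -((n.choose i : R) * (-1) ^ (n - i) * f i) := by
    intro i hi
    rw [Nat.sub_add_comm (Nat.lt_succ_iff.mp (mem_range.mp hi)), pow_succ]
    ring
  simp only [← mul_assoc] at hpascal
  rw [binomialTransform, hpascal, sum_congr rfl hsign, sum_neg_distrib, binomialTransform,
    binomialTransform]
  ring

lemma binomialTransform_choose_mul_pow (k : ℕ) (x : R) (n : ℕ) :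
    binomialTransform (fun i ↦ (i.choose k : R) * x ^ i) n =
      n.choose k * x ^ k * (x - 1) ^ (n - k) := by
  rcases lt_or_ge n k with hnk | hkn
  · rw [Nat.choose_eq_zero_of_lt hnk, Nat.cast_zero, zero_mul, zero_mul, binomialTransform]
    refine sum_eq_zero fun i hi ↦ ?_
    rw [Nat.choose_eq_zero_of_lt (n := i) (by grind), Nat.cast_zero]
    ring
  obtain ⟨p, rfl⟩ := Nat.exists_eq_add_of_le hkn
  have hlow : ∑ i ∈ range k,
      ((k + p).choose i : R) * (-1) ^ (k + p - i) * ((i.choose k : R) * x ^ i) = 0 :=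
    sum_eq_zero fun i hi ↦ by
      rw [Nat.choose_eq_zero_of_lt (mem_range.mp hi), Nat.cast_zero]
      ring
  have hhigh : ∀ j ∈ range (p + 1),
      ((k + p).choose (k + j) : R) * (-1) ^ (k + p - (k + j)) *
          (((k + j).choose k : R) * x ^ (k + j)) =
        (k + p).choose k * x ^ k * (x ^ j * (-1) ^ (p - j) * p.choose j) := by
    intro j _
    have h := Nat.choose_mul (n := k + p) (k := k + j) (s := k) (by omega)
    simp only [Nat.add_sub_cancel_left] at h
    have hc : ((k + p).choose (k + j) : R) * ((k + j).choose k) =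
        (k + p).choose k * p.choose j := by
      rw [← Nat.cast_mul, ← Nat.cast_mul, h]
    rw [Nat.add_sub_add_left, pow_add]
    linear_combination (x ^ k * x ^ j * (-1) ^ (p - j)) * hc
  rw [binomialTransform, show k + p + 1 = k + (p + 1) by ring, sum_range_add, hlow, zero_add,
    sum_congr rfl hhigh, ← mul_sum, Nat.add_sub_cancel_left, sub_eq_add_neg x 1, add_pow]

lemma binomialTransform_pow_mul_sum_choose (f : ℕ → R) (x : R) (n : ℕ) :
    binomialTransform (fun i ↦ x ^ i * ∑ k ∈ range (i + 1), (i.choose k : R) * f k) n =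
      ∑ k ∈ range (n + 1), n.choose k * x ^ k * (x - 1) ^ (n - k) * f k := by
  have hextend : ∀ i ∈ range (n + 1),
      ∑ k ∈ range (i + 1), (i.choose k : R) * f k =
        ∑ k ∈ range (n + 1), (i.choose k : R) * f k := by
    intro i hi
    refine sum_subset (range_subset_range.mpr (mem_range.mp hi)) fun k _ hk ↦ ?_
    rw [Nat.choose_eq_zero_of_lt (not_lt.mp (mt mem_range.mpr hk)), Nat.cast_zero, zero_mul]
  calc binomialTransform (fun i ↦ x ^ i * ∑ k ∈ range (i + 1), (i.choose k : R) * f k) n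
      = ∑ i ∈ range (n + 1), ∑ k ∈ range (n + 1),
          (n.choose i : R) * (-1) ^ (n - i) * ((i.choose k : R) * x ^ i) * f k := by
        refine sum_congr rfl fun i hi ↦ ?_
        beta_reduce
        rw [hextend i hi, mul_sum, mul_sum]
        exact sum_congr rfl fun _ _ ↦ by ring
    _ = ∑ k ∈ range (n + 1), binomialTransform (fun i ↦ (i.choose k : R) * x ^ i) n * f k := by
        rw [sum_comm]
        simp only [binomialTransform, sum_mul]
    _ = _ := by simp only [binomialTransform_choose_mul_pow]

end BinomialTransform

lemma binomialTransform_inv_two_pow_mul_sum_choose {K : Type*} [Field K] [NeZero (2 : K)]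
    (f : ℕ → K) (n : ℕ) :
    binomialTransform (fun i ↦ 2⁻¹ ^ i * ∑ k ∈ range (i + 1), (i.choose k : K) * f k) n =
      2⁻¹ ^ n * binomialTransform f n := by
  rw [binomialTransform_pow_mul_sum_choose, binomialTransform, mul_sum]
  refine sum_congr rfl fun k hk ↦ ?_
  have hhalf : (2⁻¹ - 1 : K) = -1 * 2⁻¹ := by
    linear_combination mul_inv_cancel₀ (two_ne_zero (α := K))
  rw [hhalf, mul_pow, ← Nat.add_sub_cancel' (Nat.lt_succ_iff.mp (mem_range.mp hk)), pow_add,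
    Nat.add_sub_cancel_left]
  ring

lemma succ_eq_of_dst_recurrence (l : ℕ → ℝ)
    (h0 : l 0 = 0) (h1 : l 1 = 0) (h2 : l 2 = 0) (h3 : l 3 = 1/2)
    (hrec : ∀ n : ℕ, 3 ≤ n →
      l (n+1) = 1 + (2:ℝ) ^ (1 - (n:ℤ)) * ∑ k ∈ Finset.range (n+1), (n.choose k : ℝ) * l k
        - (n : ℝ) * (2:ℝ) ^ (1 - (n:ℤ))) (i : ℕ) :
    l (i + 1) = 1 + 2 * (2⁻¹ ^ i * ∑ k ∈ range (i + 1), (i.choose k : ℝ) * l k)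
      - 2 * (i * 2⁻¹ ^ i) + ((if i = 2 then 2⁻¹ else 0) - (if i = 0 then 1 else 0)) := by
  match i with
  | 0 | 1 | 2 => norm_num [sum_range_succ, h0, h1, h2, h3]
  | i + 3 =>
    rw [hrec (i + 3) le_add_self, zpow_sub₀ two_ne_zero, zpow_one, zpow_natCast, inv_pow,
      if_neg (by omega), if_neg (by omega), sub_zero, add_zero]
    ring

lemma binomialTransform_succ_of_extended_recurrence (l : ℕ → ℝ)
    (hl : ∀ i, l (i + 1) = 1 + 2 * (2⁻¹ ^ i * ∑ k ∈ range (i + 1), (i.choose k : ℝ) * l k)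
      - 2 * (i * 2⁻¹ ^ i) + ((if i = 2 then 2⁻¹ else 0) - (if i = 0 then 1 else 0)))
    (n : ℕ) (hn : 2 ≤ n) :
    binomialTransform l (n + 1) = (2 * 2⁻¹ ^ n - 1) * binomialTransform l n
      + (-1) ^ n * (2 * n * 2⁻¹ ^ n - 1 + n * (n - 1) / 4) := by
  have hconst := binomialTransform_choose_mul_pow 0 (1 : ℝ) n
  simp only [Nat.choose_zero_right, Nat.cast_one, one_pow, one_mul, sub_self, Nat.sub_zero]
    at hconst
  have hlinear := binomialTransform_choose_mul_pow 1 (2⁻¹ : ℝ) n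
  simp only [Nat.choose_one_right] at hlinear
  rw [binomialTransform_succ, funext hl, binomialTransform_add, binomialTransform_sub,
    binomialTransform_add, binomialTransform_const_mul, binomialTransform_const_mul,
    binomialTransform_sub, binomialTransform_ite_eq, binomialTransform_ite_eq, hconst, hlinear,
    binomialTransform_inv_two_pow_mul_sum_choose]
  obtain ⟨p, rfl⟩ := Nat.exists_eq_add_of_le' hn
  norm_num [Nat.cast_choose_two, pow_succ, neg_div, neg_pow (1 / 2 : ℝ)]
  ring

lemma eq_mul_sum_div_of_succ_eq {K : Type*} [Field K] {v q ρ d : ℕ → K} (hv₀ : v 0 = 0)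
    (hv : ∀ n, v (n + 1) = ρ n * v n + d (n + 1)) (hq : ∀ n, q (n + 1) = ρ n * q n)
    (hq₀ : ∀ n, q (n + 1) ≠ 0) (n : ℕ) : v n = q n * ∑ k ∈ Icc 1 n, d k / q k := by
  induction n with
  | zero => simp [hv₀]
  | succ n ih =>
    rw [hv, ih, sum_Icc_succ_top (by omega), mul_add, mul_div_cancel₀ _ (hq₀ n), hq]
    ring

lemma Q_succ (n : ℕ) : Q (n + 1) = (1 - 2⁻¹ ^ (n + 1)) * Q n := by
  rw [Q, prod_Icc_succ_top (by omega), Q, mul_comm, zpow_neg, zpow_natCast, inv_pow]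

lemma Q_pos (n : ℕ) : 0 < Q n :=
  prod_pos fun k hk ↦ by
    rw [zpow_neg, zpow_natCast, sub_pos]
    exact inv_lt_one_of_one_lt₀ (one_lt_pow₀ one_lt_two (by grind))

/-- For every `N ≥ 2`, the closed form
`m_N = Q_{N-2} (-1)^N ∑_{n=1}^{N-2} (1 - (n+1)2^{-n} - n(n+1)/4)/Q_n`. -/
theorem dst_poisson_coeff_closed_form
    (l : ℕ → ℝ)
    (h0 : l 0 = 0) (h1 : l 1 = 0) (h2 : l 2 = 0) (h3 : l 3 = 1/2)
    (hrec : ∀ n : ℕ, 3 ≤ n →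
      l (n+1) = 1 + (2:ℝ) ^ (1 - (n:ℤ)) * ∑ k ∈ Finset.range (n+1), (n.choose k : ℝ) * l k
        - (n : ℝ) * (2:ℝ) ^ (1 - (n:ℤ)))
    (m : ℕ → ℝ)
    (hm : ∀ n : ℕ, m n = ∑ k ∈ Finset.range (n+1), (n.choose k : ℝ) * (-1)^(n-k) * l k) :
    ∀ N : ℕ, 2 ≤ N →
      m N = Q (N-2) * (-1)^N *
        ∑ n ∈ Finset.Icc 1 (N-2),
          (1 - ((n:ℝ)+1) * (2:ℝ) ^ (-(n:ℤ)) - (n:ℝ) * ((n:ℝ)+1) / 4) / Q n := by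
  obtain rfl : m = binomialTransform l := funext hm
  have hrecT := binomialTransform_succ_of_extended_recurrence l
    (succ_eq_of_dst_recurrence l h0 h1 h2 h3 hrec)
  have hsq (M : ℕ) : ((-1 : ℝ) ^ M) ^ 2 = 1 := by rw [← pow_mul, pow_mul']; norm_num
  intro N hN
  obtain ⟨M, rfl⟩ := Nat.exists_eq_add_of_le' hN
  have key := eq_mul_sum_div_of_succ_eq (v := fun M ↦ (-1) ^ M * binomialTransform l (M + 2))
    (ρ := fun n ↦ 1 - 2⁻¹ ^ (n + 1)) (d := fun n : ℕ ↦ 1 - ((n : ℝ) + 1) * (2 : ℝ) ^ (-(n : ℤ))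
      - (n : ℝ) * ((n : ℝ) + 1) / 4) ?_ ?_ Q_succ (fun n ↦ (Q_pos _).ne') M
  · rw [Nat.add_sub_cancel]
    linear_combination (-1) ^ M * key - binomialTransform l (M + 2) * hsq M
  · simp [binomialTransform, sum_range_succ, h0, h1, h2]
  · intro n
    rw [hrecT (n + 2) le_add_self, zpow_neg, zpow_natCast, ← inv_pow]
    push_cast
    linear_combination
      (1 - ((n : ℝ) + 2) * 2⁻¹ ^ (n + 1) - ((n : ℝ) + 1) * ((n : ℝ) + 2) / 4) * hsq n
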